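/- Let m_1(r) = r (1 + r²)^{1/2} (tanh(r)/r)^{1/2} for r > 0. Then m_1 is differentiable on (0,∞), m_1'(r) > 0, and there exist constants c, C > 0 such that c (1+r²)^{1/4} ≤ m_1'(r) ≤ C (1+r²)^{1/4} for all r > 0. -/

import Mathlib

open Real

lemma tanh_hasDerivAt (x : ℝ) : HasDerivAt Real.tanh (1 - Real.tanh x ^ 2) x := by
  have h := (Real.hasDerivAt_sinh x).div (Real.hasDerivAt_cosh x) (Real.cosh_pos x).ne'
  have he : ∀ y : ℝ, Real.tanh y = Real.sinh y / Real.cosh y := fun y => Real.tanh_eq_sinh_div_cosh y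
  have hv : (Real.cosh x * Real.cosh x - Real.sinh x * Real.sinh x) / Real.cosh x ^ 2
      = 1 - Real.tanh x ^ 2 := by
    rw [he]
    have hc := (Real.cosh_pos x).ne'
    field_simp
  rw [← hv]
  have : Real.tanh = fun y => Real.sinh y / Real.cosh y := funext he
  rw [this]; exact h

lemma tanh_pos' {x : ℝ} (hx : 0 < x) : 0 < Real.tanh x := by
  rw [Real.tanh_eq_sinh_div_cosh]
  exact div_pos (by rwa [Real.sinh_pos_iff]) (Real.cosh_pos x)

lemma tanh_lt_one' (x : ℝ) : Real.tanh x < 1 := by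
  rw [Real.tanh_eq_sinh_div_cosh, div_lt_one (Real.cosh_pos x)]
  exact Real.sinh_lt_cosh x

lemma sinh_le_mul_cosh {x : ℝ} (hx : 0 ≤ x) : Real.sinh x ≤ x * Real.cosh x := by
  have mono : MonotoneOn (fun y => y * Real.cosh y - Real.sinh y) (Set.Ici 0) := by
    have hd : ∀ y : ℝ, HasDerivAt (fun y => y * Real.cosh y - Real.sinh y) (y * Real.sinh y) y := by
      intro y
      have h := ((hasDerivAt_id y).mul (Real.hasDerivAt_cosh y)).sub (Real.hasDerivAt_sinh y)
      have e : (1:ℝ) * Real.cosh y + id y * Real.sinh y - Real.cosh y = y * Real.sinh y := by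
        simp only [id]; ring
      rw [e] at h
      exact h
    apply monotoneOn_of_deriv_nonneg (convex_Ici 0)
    · exact (Continuous.sub (continuous_id.mul Real.continuous_cosh) Real.continuous_sinh).continuousOn
    · exact fun y _ => ((hd y).differentiableAt).differentiableWithinAt
    · intro y hy
      rw [interior_Ici] at hy
      rw [(hd y).deriv]
      exact mul_nonneg (le_of_lt hy) (by rw [← Real.sinh_zero]; exact (Real.sinh_le_sinh).2 (le_of_lt hy))
  have := mono (Set.self_mem_Ici) (Set.mem_Ici.2 hx) hx
  simp at this
  linarith

lemma tanh_le_self {x : ℝ} (hx : 0 ≤ x) : Real.tanh x ≤ x := by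
  rw [Real.tanh_eq_sinh_div_cosh, div_le_iff₀ (Real.cosh_pos x)]
  exact sinh_le_mul_cosh hx

lemma one_sub_tanh_sq (x : ℝ) : 1 - Real.tanh x ^ 2 = 1 / Real.cosh x ^ 2 := by
  rw [Real.tanh_eq_sinh_div_cosh]
  have hc := (Real.cosh_pos x).ne'
  field_simp
  linarith [Real.cosh_sq x]

lemma key_lower {r : ℝ} (hr : 0 < r) : r ≤ Real.sqrt (1 + r ^ 2) * Real.tanh r := by
  have hs : r ≤ Real.sinh r := (Real.self_lt_sinh_iff.2 hr).le
  have hcp := Real.cosh_pos r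
  have hS : Real.sqrt (1 + r ^ 2) ^ 2 = 1 + r ^ 2 := Real.sq_sqrt (by positivity)
  have h1 : (r * Real.cosh r) ^ 2 ≤ (Real.sqrt (1 + r ^ 2) * Real.sinh r) ^ 2 := by
    rw [mul_pow, mul_pow, hS]
    nlinarith [Real.cosh_sq r, hs, hr]
  have h2 : r * Real.cosh r ≤ Real.sqrt (1 + r ^ 2) * Real.sinh r := by
    have hb : 0 ≤ Real.sqrt (1 + r ^ 2) * Real.sinh r :=
      mul_nonneg (Real.sqrt_nonneg _) (le_trans hr.le hs)
    nlinarith [mul_pos hr hcp]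
  rw [Real.tanh_eq_sinh_div_cosh, ← mul_div_assoc, le_div_iff₀ hcp]
  exact h2

lemma key_upper {r : ℝ} (hr : 0 < r) :
    Real.sqrt (1 + r ^ 2) * Real.tanh r ≤ Real.sqrt 2 * r := by
  have ht0 : 0 ≤ Real.tanh r := (tanh_pos' hr).le
  rcases le_total r 1 with h | h
  · have h1 : Real.sqrt (1 + r ^ 2) ≤ Real.sqrt 2 := Real.sqrt_le_sqrt (by nlinarith)
    have h2 : Real.tanh r ≤ r := tanh_le_self hr.le
    exact mul_le_mul h1 h2 ht0 (Real.sqrt_nonneg 2)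
  · have h1 : Real.sqrt (1 + r ^ 2) ≤ Real.sqrt 2 * r := by
      rw [show Real.sqrt 2 * r = Real.sqrt (2 * r ^ 2) by
        rw [Real.sqrt_mul (by norm_num), Real.sqrt_sq (by linarith)]]
      exact Real.sqrt_le_sqrt (by nlinarith)
    have h2 : Real.tanh r ≤ 1 := (tanh_lt_one' r).le
    calc Real.sqrt (1 + r ^ 2) * Real.tanh r ≤ (Real.sqrt 2 * r) * 1 :=
          mul_le_mul h1 h2 ht0 (by positivity)
      _ = Real.sqrt 2 * r := by ring

lemma sqrt_two_le : Real.sqrt 2 ≤ 5 / 3 := by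
  nlinarith [Real.sq_sqrt (by norm_num : (0:ℝ) ≤ 2), Real.sqrt_nonneg 2]

/-- `m₁(r) = r (1 + r²)^{1/2} (tanh r / r)^{1/2}`. -/
noncomputable def m1 (r : ℝ) : ℝ := r * Real.sqrt (1 + r ^ 2) * Real.sqrt (Real.tanh r / r)

lemma m1_eq {r : ℝ} (hr : 0 < r) : m1 r = Real.sqrt ((r + r ^ 3) * Real.tanh r) := by
  unfold m1
  have h1 : (r + r ^ 3) * Real.tanh r = (1 + r ^ 2) * (r ^ 2 * (Real.tanh r / r)) := by
    field_simp
  rw [h1, Real.sqrt_mul (by positivity), Real.sqrt_mul (by positivity : (0:ℝ) ≤ r ^ 2),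
    Real.sqrt_sq hr.le]
  ring

lemma m1_hasDerivAt {r : ℝ} (hr : 0 < r) :
    HasDerivAt m1
      (((1 + 3 * r ^ 2) * Real.tanh r + (r + r ^ 3) * (1 - Real.tanh r ^ 2)) /
        (2 * Real.sqrt ((r + r ^ 3) * Real.tanh r))) r := by
  have hgpos : 0 < (r + r ^ 3) * Real.tanh r := mul_pos (by positivity) (tanh_pos' hr)
  have hgd : HasDerivAt (fun x => (x + x ^ 3) * Real.tanh x)
      ((1 + 3 * r ^ 2) * Real.tanh r + (r + r ^ 3) * (1 - Real.tanh r ^ 2)) r := by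
    have h := ((hasDerivAt_id r).add (hasDerivAt_pow 3 r)).mul (tanh_hasDerivAt r)
    exact h.congr_deriv (by norm_num [Pi.add_apply] <;> ring)
  have hs := (Real.hasDerivAt_sqrt hgpos.ne').comp r hgd
  have hcongr : HasDerivAt m1
      (1 / (2 * Real.sqrt ((r + r ^ 3) * Real.tanh r)) *
        ((1 + 3 * r ^ 2) * Real.tanh r + (r + r ^ 3) * (1 - Real.tanh r ^ 2))) r := by
    apply hs.congr_of_eventuallyEq
    filter_upwards [Ioi_mem_nhds hr] with x hx
    exact m1_eq hx
  convert hcongr using 1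
  ring

set_option maxHeartbeats 1000000 in
/-- `m₁` is differentiable on `(0,∞)`, `m₁' > 0`, and `m₁'(r) ∼ (1 + r²)^{1/4}`. -/
theorem stmt_11 :
    (∀ r : ℝ, 0 < r → DifferentiableAt ℝ m1 r) ∧
      ∃ c > (0 : ℝ), ∃ C > (0 : ℝ), ∀ r : ℝ, 0 < r →
        0 < deriv m1 r ∧
        c * (1 + r ^ 2) ^ ((1 : ℝ) / 4) ≤ deriv m1 r ∧
        deriv m1 r ≤ C * (1 + r ^ 2) ^ ((1 : ℝ) / 4) := by
  refine ⟨fun r hr => (m1_hasDerivAt hr).differentiableAt, 1/3, by norm_num, 3, by norm_num,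
    fun r hr => ?_⟩
  have hD := (m1_hasDerivAt hr).deriv
  set t := Real.tanh r with ht
  set S := Real.sqrt (1 + r ^ 2) with hSdef
  set Q := Real.sqrt S with hQdef
  set G := (r + r ^ 3) * t with hGdef
  set A := (1 + 3 * r ^ 2) * t + (r + r ^ 3) * (1 - t ^ 2) with hAdef
  clear_value t S Q G A
  have hS2 : S ^ 2 = 1 + r ^ 2 := by rw [hSdef]; exact Real.sq_sqrt (by positivity)
  have hSpos : 0 < S := by rw [hSdef]; exact Real.sqrt_pos.2 (by positivity)
  have hS1 : 1 ≤ S := by nlinarith [hSpos, sq_nonneg r]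
  have hQ2 : Q ^ 2 = S := by rw [hQdef]; exact Real.sq_sqrt hSpos.le
  have hQpos : 0 < Q := by rw [hQdef]; exact Real.sqrt_pos.2 hSpos
  have ht0 : 0 ≤ t := by rw [ht]; exact (tanh_pos' hr).le
  have ht1 : t ≤ 1 := by rw [ht]; exact (tanh_lt_one' r).le
  have hkl : r ≤ S * t := by rw [hSdef, ht]; exact key_lower hr
  have hku : S * t ≤ Real.sqrt 2 * r := by rw [hSdef, ht]; exact key_upper hr
  have hGeq : G = r * S * (S * t) := by
    rw [hGdef]; linear_combination (-(r * t)) * hS2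
  -- bounds on G
  have hGl : r ^ 2 * S ≤ G := by
    rw [hGeq]
    nlinarith [mul_le_mul_of_nonneg_left hkl (mul_nonneg hr.le hSpos.le)]
  have hGu : G ≤ (9 / 4) * (r ^ 2 * S) := by
    rw [hGeq]
    nlinarith [mul_le_mul_of_nonneg_left hku (mul_nonneg hr.le hSpos.le), sqrt_two_le,
      mul_pos hr (mul_pos hr hSpos)]
  have hGpos : 0 < G := lt_of_lt_of_le (by positivity) hGl
  -- bounds on sqrt G
  have hsGl : r * Q ≤ Real.sqrt G := by
    have := Real.sqrt_le_sqrt hGl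
    rwa [Real.sqrt_mul (by positivity : (0:ℝ) ≤ r ^ 2), Real.sqrt_sq hr.le, ← hQdef] at this
  have hsGu : Real.sqrt G ≤ (3 / 2) * (r * Q) := by
    have h1 := Real.sqrt_le_sqrt hGu
    have h2 : Real.sqrt ((9 / 4) * (r ^ 2 * S)) = (3 / 2) * (r * Q) := by
      rw [Real.sqrt_mul (by norm_num : (0:ℝ) ≤ 9 / 4),
        Real.sqrt_mul (by positivity : (0:ℝ) ≤ r ^ 2), Real.sqrt_sq hr.le,
        show (9 / 4 : ℝ) = (3 / 2) ^ 2 by norm_num, Real.sqrt_sq (by norm_num), ← hQdef]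
    rwa [h2] at h1
  -- bounds on A
  have hsq : 1 + r ^ 2 ≤ Real.cosh r ^ 2 := by
    have hs : r ≤ Real.sinh r := (Real.self_lt_sinh_iff.2 hr).le
    nlinarith [Real.cosh_sq r, hr]
  have hsecond : (r + r ^ 3) * (1 - t ^ 2) ≤ r := by
    rw [ht, one_sub_tanh_sq, mul_one_div, div_le_iff₀ (by positivity : (0:ℝ) < Real.cosh r ^ 2)]
    nlinarith
  have hsecond0 : 0 ≤ (r + r ^ 3) * (1 - t ^ 2) :=
    mul_nonneg (by positivity) (by nlinarith)
  have hSt : S * (S * t) = (1 + r ^ 2) * t := by linear_combination t * hS2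
  have hAl : r * S ≤ A := by
    rw [hAdef]
    have h1 : S * r ≤ (1 + r ^ 2) * t := by
      rw [← hSt]; exact mul_le_mul_of_nonneg_left hkl hSpos.le
    nlinarith [h1, hsecond0, mul_nonneg (sq_nonneg r) ht0]
  have hAu : A ≤ 6 * (r * S) := by
    rw [hAdef]
    have h1 : (1 + r ^ 2) * t ≤ S * (Real.sqrt 2 * r) := by
      rw [← hSt]; exact mul_le_mul_of_nonneg_left hku hSpos.le
    have h2 : 3 * (S * (Real.sqrt 2 * r)) ≤ 5 * (r * S) := by
      nlinarith [mul_nonneg (sub_nonneg.2 sqrt_two_le) (mul_pos hr hSpos).le]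
    have h3 : r ≤ r * S := by nlinarith [hS1, hr]
    nlinarith [hsecond, h1, h2, h3, ht0]
  -- rewrite the power
  have hQr : (1 + r ^ 2) ^ ((1 : ℝ) / 4) = Q := by
    rw [hQdef, hSdef, Real.sqrt_eq_rpow, Real.sqrt_eq_rpow, ← Real.rpow_mul (by positivity)]
    norm_num
  have hsGpos : 0 < Real.sqrt G := Real.sqrt_pos.2 hGpos
  have hDval : deriv m1 r = A / (2 * Real.sqrt G) := hD
  have hlow : (1 / 3) * Q ≤ deriv m1 r := by
    rw [hDval, le_div_iff₀ (by positivity)]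
    nlinarith [mul_le_mul_of_nonneg_left hsGu hQpos.le, hQ2, hAl, hQpos]
  have hhigh : deriv m1 r ≤ 3 * Q := by
    rw [hDval, div_le_iff₀ (by positivity)]
    nlinarith [mul_le_mul_of_nonneg_left hsGl hQpos.le, hQ2, hAu, hQpos]
  refine ⟨lt_of_lt_of_le (by positivity) hlow, ?_, ?_⟩
  · rwa [hQr]
  · rwa [hQr]
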